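/- arXiv:2104.09637 — 3 statements merged into one kernel-verified Lean document; each statement's English description precedes it below -/
import Mathlib

section
/- Let H be an N×N Hermitian complex matrix with orthonormal eigenvectors φ_1,…,φ_N and corresponding real eigenvalues θ_1,…,θ_N, let ψ(0) = Σ_{j=1}^N a_j φ_j with a_1,…,a_N ∈ ℂ, and let ψ(t) = exp(−itH)ψ(0). Then for any vector ξ ∈ ℂ^N, the limit as T → ∞ of (1/T)∫_0^T |⟨ξ, ψ(t)⟩|² dt exists and equals Σ_{j,k : θ_j = θ_k} a_j a_k* ⟨ξ, φ_j⟩ ⟨φ_k, ξ⟩, where * denotes complex conjugation. -/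
/-!
Expanding `ψ 0` in the eigenvectors gives `⟨ξ, ψ t⟩ = ∑ j, b j * exp (-i θ_j t)` with
`b j = a j * ⟨ξ, φ j⟩`, so `|⟨ξ, ψ t⟩|²` is a finite combination of the oscillations
`exp (i (θ_k - θ_j) t)`. The integral over `[0, T]` of such an oscillation is `T` when
`θ_j = θ_k` and stays bounded otherwise, so its time average tends to `1` or `0`.
-/

open Complex Filter Topology
open scoped Matrix

section
-- `exp` depends only on the topology, so any matrix norm inducing it serves for the proof.
attribute [local instance] Matrix.linftyOpNormedRing Matrix.linftyOpNormedAlgebra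

theorem Matrix.exp_mulVec_of_mulVec_eq_smul {n 𝕂 : Type*} [Fintype n] [DecidableEq n] [RCLike 𝕂]
    {A : Matrix n n 𝕂} {v : n → 𝕂} {μ : 𝕂} (h : A *ᵥ v = μ • v) :
    NormedSpace.exp A *ᵥ v = NormedSpace.exp μ • v := by
  have hpow : ∀ k : ℕ, A ^ k *ᵥ v = μ ^ k • v := by
    intro k
    induction k with
    | zero => simp
    | succ k ih =>
      rw [pow_succ, ← Matrix.mulVec_mulVec, h, Matrix.mulVec_smul, ih, smul_smul, pow_succ']
  have hA := (NormedSpace.exp_series_hasSum_exp' (𝕂 := 𝕂) A).map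
    (Matrix.mulVec.addMonoidHomLeft v) (continuous_id.matrix_mulVec continuous_const)
  have hμ := (NormedSpace.exp_series_hasSum_exp' (𝕂 := 𝕂) μ).smul_const v
  refine hA.unique (hμ.congr_fun fun k => ?_)
  simp [Matrix.mulVec.addMonoidHomLeft, Matrix.smul_mulVec, hpow, smul_smul]

end

theorem norm_integral_exp_mul_le_of_re_eq_zero {c : ℂ} (hc : c.re = 0) (hc0 : c ≠ 0) (T : ℝ) :
    ‖∫ t in (0 : ℝ)..T, cexp (c * t)‖ ≤ 2 / ‖c‖ := by
  have hnorm : ‖cexp (c * T)‖ = 1 := by simp [Complex.norm_exp, hc]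
  rw [integral_exp_mul_complex hc0, norm_div]
  gcongr
  calc ‖cexp (c * T) - cexp (c * (0 : ℝ))‖ ≤ ‖cexp (c * T)‖ + ‖cexp (c * (0 : ℝ))‖ :=
        norm_sub_le _ _
    _ = 2 := by norm_num [hnorm]

theorem tendsto_average_integral_exp_mul_of_re_eq_zero {c : ℂ} (hc : c.re = 0) :
    Tendsto (fun T : ℝ => (1 / T : ℂ) * ∫ t in (0 : ℝ)..T, cexp (c * t)) atTop
      (𝓝 (if c = 0 then 1 else 0)) := by
  split_ifs with hc0
  · refine tendsto_const_nhds.congr' ?_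
    filter_upwards [eventually_ne_atTop 0] with T hT
    simp [hc0, hT]
  · have hinv : Tendsto (fun T : ℝ => (1 / T : ℂ)) atTop (𝓝 0) := by
      simpa [Function.comp_def] using (continuous_ofReal.tendsto 0).comp tendsto_inv_atTop_zero
    exact hinv.zero_mul_isBoundedUnder_le
      ⟨2 / ‖c‖, eventually_map.2 (Eventually.of_forall
        (norm_integral_exp_mul_le_of_re_eq_zero hc hc0))⟩

theorem ofReal_norm_sq_sum_exp {ι : Type*} [Fintype ι] (b : ι → ℂ) (θ : ι → ℝ) (t : ℝ) :
    ((‖∑ j, b j * cexp (-(θ j * I) * t)‖ ^ 2 : ℝ) : ℂ) =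
      ∑ j, ∑ k, b j * star (b k) * cexp ((θ k - θ j) * I * t) := by
  rw [ofReal_pow, ← Complex.mul_conj', map_sum, Finset.sum_mul_sum]
  refine Finset.sum_congr rfl fun j _ => Finset.sum_congr rfl fun k _ => ?_
  rw [map_mul, ← exp_conj, mul_mul_mul_comm, ← exp_add]
  congr 2
  simp [map_neg, conj_ofReal]
  ring

theorem tendsto_average_norm_sq_sum_exp {ι : Type*} [Fintype ι] (b : ι → ℂ) (θ : ι → ℝ) :
    Tendsto (fun T : ℝ =>
        (((1 / T) * ∫ t in (0 : ℝ)..T, ‖∑ j, b j * cexp (-(θ j * I) * t)‖ ^ 2 : ℝ) : ℂ))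
      atTop (𝓝 (∑ j, ∑ k, if θ j = θ k then b j * star (b k) else 0)) := by
  have hint : ∀ j k : ι, ∀ T : ℝ,
      IntervalIntegrable (fun t : ℝ => cexp ((θ k - θ j) * I * t)) MeasureTheory.volume 0 T :=
    fun j k T => (by fun_prop : Continuous _).intervalIntegrable _ _
  have hexpand : ∀ T : ℝ,
      (((1 / T) * ∫ t in (0 : ℝ)..T, ‖∑ j, b j * cexp (-(θ j * I) * t)‖ ^ 2 : ℝ) : ℂ) =
        ∑ j, ∑ k, b j * star (b k) *
          ((1 / T : ℂ) * ∫ t in (0 : ℝ)..T, cexp ((θ k - θ j) * I * t)) := by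
    intro T
    rw [ofReal_mul, ← intervalIntegral.integral_ofReal]
    simp_rw [ofReal_norm_sq_sum_exp]
    rw [intervalIntegral.integral_finsetSum fun j _ =>
      (by fun_prop : Continuous _).intervalIntegrable _ _, Finset.mul_sum]
    refine Finset.sum_congr rfl fun j _ => ?_
    rw [intervalIntegral.integral_finsetSum fun k _ => (hint j k T).const_mul _, Finset.mul_sum]
    refine Finset.sum_congr rfl fun k _ => ?_
    rw [intervalIntegral.integral_const_mul]
    push_cast
    ring
  simp_rw [hexpand]
  refine tendsto_finsetSum _ fun j _ => tendsto_finsetSum _ fun k _ => ?_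
  have hlim := (tendsto_average_integral_exp_mul_of_re_eq_zero
    (c := (θ k - θ j) * I) (by simp)).const_mul (b j * star (b k))
  convert hlim using 2
  simp [sub_eq_zero, eq_comm]

theorem stmt_0_general (N : ℕ) (H : Matrix (Fin N) (Fin N) ℂ)
    (φ : Fin N → (Fin N → ℂ)) (θ : Fin N → ℝ)
    (heig : ∀ j : Fin N, H.mulVec (φ j) = (θ j : ℂ) • φ j)
    (a : Fin N → ℂ) (ψ : ℝ → (Fin N → ℂ))
    (hψ : ∀ t : ℝ,
      ψ t = (NormedSpace.exp ((-(Complex.I * t)) • H)).mulVec (∑ j, a j • φ j))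
    (ξ : Fin N → ℂ) :
    Filter.Tendsto
      (fun T : ℝ =>
        (((1 / T) * ∫ t in (0:ℝ)..T, ‖∑ i, star (ξ i) * ψ t i‖ ^ 2 : ℝ) : ℂ))
      Filter.atTop
      (nhds (∑ j, ∑ k,
        if θ j = θ k then
          a j * star (a k) * (∑ i, star (ξ i) * φ j i) * (∑ i, star (φ k i) * ξ i)
        else 0)) := by
  set b : Fin N → ℂ := fun j => a j * ∑ i, star (ξ i) * φ j i
  have hψ_eig : ∀ t : ℝ, ψ t = ∑ j, (a j * cexp (-(θ j * I) * t)) • φ j := by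
    intro t
    rw [hψ, Matrix.mulVec_sum]
    refine Finset.sum_congr rfl fun j _ => ?_
    have hHt : ((-(I * t)) • H) *ᵥ φ j = (-(θ j * I) * t) • φ j := by
      rw [Matrix.smul_mulVec, heig, smul_smul]
      ring_nf
    rw [Matrix.mulVec_smul, Matrix.exp_mulVec_of_mulVec_eq_smul hHt, ← Complex.exp_eq_exp_ℂ,
      smul_smul, mul_comm]
  have hinner : ∀ t : ℝ, ∑ i, star (ξ i) * ψ t i = ∑ j, b j * cexp (-(θ j * I) * t) := by
    intro t
    simp only [hψ_eig, b, Finset.sum_apply, Pi.smul_apply, smul_eq_mul, Finset.mul_sum,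
      Finset.sum_mul]
    rw [Finset.sum_comm]
    exact Finset.sum_congr rfl fun j _ => Finset.sum_congr rfl fun i _ => by ring
  simp_rw [hinner]
  convert tendsto_average_norm_sq_sum_exp b θ using 4 with j _ k _
  simp only [b, star_mul', star_sum, star_star, mul_comm (ξ _)]
  congr 1
  ring

/-- Let `H` be an `N×N` Hermitian complex matrix with orthonormal
eigenvectors `φ 1, …, φ N` and corresponding real eigenvalues `θ 1, …, θ N`, let
`ψ 0 = ∑ j, a j • φ j`, and let `ψ t = exp (-itH) (ψ 0)`.  Then for any vector `ξ ∈ ℂ^N`,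
the limit as `T → ∞` of `(1/T) ∫_0^T |⟨ξ, ψ t⟩|² dt` exists and equals
`∑_{j,k : θ j = θ k} a j * (a k)* * ⟨ξ, φ j⟩ * ⟨φ k, ξ⟩`. -/
theorem stmt_0 (N : ℕ) (H : Matrix (Fin N) (Fin N) ℂ) (hH : H.IsHermitian)
    (φ : Fin N → (Fin N → ℂ)) (θ : Fin N → ℝ)
    (horth : ∀ j k : Fin N, (∑ i, star (φ j i) * φ k i) = if j = k then 1 else 0)
    (heig : ∀ j : Fin N, H.mulVec (φ j) = (θ j : ℂ) • φ j)
    (a : Fin N → ℂ) (ψ : ℝ → (Fin N → ℂ))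
    (hψ : ∀ t : ℝ,
      ψ t = (NormedSpace.exp ((-(Complex.I * t)) • H)).mulVec (∑ j, a j • φ j))
    (ξ : Fin N → ℂ) :
    Filter.Tendsto
      (fun T : ℝ =>
        (((1 / T) * ∫ t in (0:ℝ)..T, ‖∑ i, star (ξ i) * ψ t i‖ ^ 2 : ℝ) : ℂ))
      Filter.atTop
      (nhds (∑ j, ∑ k,
        if θ j = θ k then
          a j * star (a k) * (∑ i, star (ξ i) * φ j i) * (∑ i, star (φ k i) * ξ i)
        else 0)) :=
  stmt_0_general N H φ θ heig a ψ hψ ξ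
end

section
/- Let H be an N×N Hermitian complex matrix with orthonormal eigenvectors φ_1,…,φ_N and corresponding real eigenvalues θ_1,…,θ_N that are pairwise distinct, let ψ(0) = Σ_{i=1}^N a_i φ_i, and let ψ(t) = exp(−itH)ψ(0). Then for every standard basis vector e_j of ℂ^N, the limit as T → ∞ of (1/T)∫_0^T |⟨e_j, ψ(t)⟩|² dt equals Σ_{i=1}^N |a_i|² |⟨e_j, φ_i⟩|². -/
/-!
Expanding `ψ 0` in the eigenbasis, `⟨e j, ψ t⟩ = ∑ i, a i * φ i j * exp (-i θ i t)`, so its squared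
modulus is a trigonometric polynomial with frequencies `θ i - θ k`. The Cesàro mean of
`exp (i ω t)` tends to `1` for `ω = 0` and to `0` otherwise, its integral being bounded by
`2 / |ω|`; as the eigenvalues are distinct, only the diagonal terms `‖a i * φ i j‖ ^ 2` survive.
-/

open scoped Matrix
open Filter Topology Complex ComplexConjugate

namespace Matrix

variable {n : Type*} [Fintype n] [DecidableEq n]

theorem pow_mulVec_of_mulVec_eq_smul {R : Type*} [CommSemiring R] {A : Matrix n n R}
    {v : n → R} {c : R} (h : A *ᵥ v = c • v) (k : ℕ) : (A ^ k) *ᵥ v = c ^ k • v := by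
  induction k with
  | zero => simp
  | succ k ih => rw [pow_succ', ← mulVec_mulVec, ih, mulVec_smul, h, smul_smul, pow_succ]

open scoped Norms.Operator in
theorem exp_mulVec_of_mulVec_eq_smul_s2 {𝕂 : Type*} [RCLike 𝕂] {A : Matrix n n 𝕂} {v : n → 𝕂}
    {c : 𝕂} (h : A *ᵥ v = c • v) : NormedSpace.exp A *ᵥ v = NormedSpace.exp c • v := by
  have hA := (NormedSpace.exp_series_hasSum_exp' (𝕂 := 𝕂) A).map (mulVec.addMonoidHomLeft v)
    (continuous_id.matrix_mulVec continuous_const)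
  refine hA.unique ?_
  simpa [Function.comp_def, mulVec.addMonoidHomLeft, smul_mulVec, smul_smul,
    pow_mulVec_of_mulVec_eq_smul h]
    using (NormedSpace.exp_series_hasSum_exp' (𝕂 := 𝕂) c).smul_const v

end Matrix

theorem tendsto_average_cexp_ofReal_mul_I (ω : ℝ) :
    Tendsto (fun T : ℝ => 1 / (T : ℂ) * ∫ t in (0 : ℝ)..T, cexp (ω * t * I)) atTop
      (𝓝 (if ω = 0 then 1 else 0)) := by
  rcases eq_or_ne ω 0 with rfl | hω
  · refine tendsto_const_nhds.congr' ?_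
    filter_upwards [eventually_ne_atTop 0] with T hT
    simp [hT]
  · simp only [hω, if_false]
    have hw : (ω * I : ℂ) ≠ 0 := mul_ne_zero (ofReal_ne_zero.mpr hω) I_ne_zero
    have hbound : ∀ T : ℝ, ‖∫ t in (0 : ℝ)..T, cexp (ω * t * I)‖ ≤ 2 / |ω| := by
      intro T
      simp_rw [mul_right_comm _ _ I]
      rw [integral_exp_mul_complex hw, norm_div, norm_mul, norm_I, mul_one, norm_real,
        Real.norm_eq_abs]
      gcongr
      calc _ ≤ ‖cexp (ω * I * T)‖ + ‖cexp (ω * I * (0 : ℝ))‖ := norm_sub_le _ _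
        _ = 2 := by
          simp_rw [mul_right_comm _ I, ← ofReal_mul, norm_exp_ofReal_mul_I]
          norm_num
    refine squeeze_zero_norm' ?_
      (by simpa using (tendsto_inv_atTop_zero (𝕜 := ℝ)).const_mul (2 / |ω|))
    filter_upwards [eventually_gt_atTop 0] with T hT
    rw [norm_mul, norm_div, norm_one, norm_real, Real.norm_of_nonneg hT.le, one_div, mul_comm]
    gcongr
    exact hbound T

theorem sq_norm_sum_mul_cexp {ι : Type*} [Fintype ι] (c : ι → ℂ) (θ : ι → ℝ) (t : ℝ) :
    ((‖∑ i, c i * cexp (-(I * t) * θ i)‖ ^ 2 : ℝ) : ℂ) =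
      ∑ i, ∑ k, conj (c i) * c k * cexp (↑(θ i - θ k) * t * I) := by
  rw [ofReal_pow, ← conj_mul', map_sum, Finset.sum_mul_sum]
  refine Finset.sum_congr rfl fun i _ => Finset.sum_congr rfl fun k _ => ?_
  rw [map_mul, ← exp_conj, mul_mul_mul_comm, ← Complex.exp_add]
  congr 2
  simp only [map_mul, map_neg, conj_ofReal, conj_I, ofReal_sub]
  ring

theorem tendsto_average_sq_norm_sum_mul_cexp {ι : Type*} [Fintype ι] [DecidableEq ι]
    (c : ι → ℂ) {θ : ι → ℝ} (hθ : Function.Injective θ) :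
    Tendsto (fun T : ℝ => 1 / T * ∫ t in (0 : ℝ)..T, ‖∑ i, c i * cexp (-(I * t) * θ i)‖ ^ 2)
      atTop (𝓝 (∑ i, ‖c i‖ ^ 2)) := by
  have hcont : ∀ i k, Continuous fun t : ℝ => conj (c i) * c k * cexp (↑(θ i - θ k) * t * I) :=
    fun i k => by fun_prop
  have hlim := tendsto_finsetSum Finset.univ fun i _ => tendsto_finsetSum Finset.univ fun k _ =>
    (tendsto_average_cexp_ofReal_mul_I (θ i - θ k)).const_mul (conj (c i) * c k)
  rw [← tendsto_ofReal_iff]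
  convert hlim using 2 with T
  · rw [ofReal_mul, ofReal_div, ofReal_one, ← intervalIntegral.integral_ofReal]
    simp_rw [sq_norm_sum_mul_cexp]
    rw [intervalIntegral.integral_finsetSum fun i _ =>
      (continuous_finsetSum _ fun k _ => hcont i k).intervalIntegrable 0 T]
    simp_rw [intervalIntegral.integral_finsetSum fun k _ => (hcont _ k).intervalIntegrable 0 T,
      intervalIntegral.integral_const_mul, Finset.mul_sum, mul_left_comm]
  · simp [sub_eq_zero, hθ.eq_iff, conj_mul']

theorem stmt_2_general (N : ℕ) (H : Matrix (Fin N) (Fin N) ℂ)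
    (φ : Fin N → (Fin N → ℂ)) (θ : Fin N → ℝ)
    (heig : ∀ j : Fin N, H.mulVec (φ j) = (θ j : ℂ) • φ j)
    (hdist : Function.Injective θ)
    (a : Fin N → ℂ) (ψ : ℝ → (Fin N → ℂ))
    (hψ : ∀ t : ℝ,
      ψ t = (NormedSpace.exp ((-(Complex.I * t)) • H)).mulVec (∑ i, a i • φ i))
    (j : Fin N) :
    Filter.Tendsto
      (fun T : ℝ =>
        (1 / T) * ∫ t in (0:ℝ)..T, ‖∑ m, star ((Pi.single j 1 : Fin N → ℂ) m) * ψ t m‖ ^ 2)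
      Filter.atTop
      (nhds (∑ i, ‖a i‖ ^ 2 * ‖∑ m, star ((Pi.single j 1 : Fin N → ℂ) m) * φ i m‖ ^ 2)) := by
  have hsingle (v : Fin N → ℂ) : ∑ m, star ((Pi.single j 1 : Fin N → ℂ) m) * v m = v j := by
    simp [Pi.single_apply]
  have hψj (t : ℝ) : ψ t j = ∑ i, a i * φ i j * cexp (-(I * t) * θ i) := by
    have hexp (i : Fin N) :
        NormedSpace.exp (-(I * t) • H) *ᵥ φ i = cexp (-(I * t) * θ i) • φ i := by
      rw [Matrix.exp_mulVec_of_mulVec_eq_smul_s2 (c := -(I * t) * θ i), Complex.exp_eq_exp_ℂ]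
      rw [Matrix.smul_mulVec, heig, smul_smul]
    simp only [hψ, Matrix.mulVec_sum, Matrix.mulVec_smul, hexp, Finset.sum_apply, Pi.smul_apply,
      smul_eq_mul, mul_assoc, mul_comm (cexp _)]
  simp_rw [hsingle, hψj, ← mul_pow, ← norm_mul]
  exact tendsto_average_sq_norm_sum_mul_cexp _ hdist

/-- If the eigenvalues of the Hermitian Hamiltonian `H` are pairwise
distinct, then for every standard basis vector `e j` the Cesàro time average of the
occupation converges to `∑ i, |a i|² * |⟨e j, φ i⟩|²`. -/
theorem stmt_2 (N : ℕ) (H : Matrix (Fin N) (Fin N) ℂ) (hH : H.IsHermitian)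
    (φ : Fin N → (Fin N → ℂ)) (θ : Fin N → ℝ)
    (horth : ∀ j k : Fin N, (∑ i, star (φ j i) * φ k i) = if j = k then 1 else 0)
    (heig : ∀ j : Fin N, H.mulVec (φ j) = (θ j : ℂ) • φ j)
    (hdist : Function.Injective θ)
    (a : Fin N → ℂ) (ψ : ℝ → (Fin N → ℂ))
    (hψ : ∀ t : ℝ,
      ψ t = (NormedSpace.exp ((-(Complex.I * t)) • H)).mulVec (∑ i, a i • φ i))
    (j : Fin N) :
    Filter.Tendsto
      (fun T : ℝ =>
        (1 / T) * ∫ t in (0:ℝ)..T, ‖∑ m, star ((Pi.single j 1 : Fin N → ℂ) m) * ψ t m‖ ^ 2)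
      Filter.atTop
      (nhds (∑ i, ‖a i‖ ^ 2 * ‖∑ m, star ((Pi.single j 1 : Fin N → ℂ) m) * φ i m‖ ^ 2)) :=
  stmt_2_general N H φ θ heig hdist a ψ hψ j
end

section
/- Let A be an n×n real matrix and let 𝒜 be the 2n×2n block matrix [[0, A],[Aᵀ, 0]]. Then for every i with 1 ≤ i ≤ n, the i-th diagonal entry of the matrix exponential satisfies [e^{𝒜}]_{i,i} = Σ_{k=0}^{∞} [(AAᵀ)^k]_{i,i}/(2k)!, and the (n+i)-th diagonal entry satisfies [e^{𝒜}]_{n+i,n+i} = Σ_{k=0}^{∞} [(AᵀA)^k]_{i,i}/(2k)!. -/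
/-!
`fromBlocks 0 B C 0` squares to the block-diagonal matrix `fromBlocks (B * C) 0 0 (C * B)`, so its
even powers are block diagonal and its odd powers have zero diagonal blocks. In the exponential
series only the even terms therefore reach the diagonal blocks.
-/

open Matrix NormedSpace Nat

namespace Matrix

variable {l m 𝕂 : Type*} [Fintype l] [DecidableEq l] [Fintype m] [DecidableEq m]

section Semiring

variable [Semiring 𝕂] (B : Matrix l m 𝕂) (C : Matrix m l 𝕂)

theorem fromBlocks_zero_sq :
    fromBlocks 0 B C 0 ^ 2 = fromBlocks (B * C) 0 0 (C * B) := by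
  simp [sq, fromBlocks_multiply]

theorem fromBlocks_zero_pow_two_mul (k : ℕ) :
    fromBlocks 0 B C 0 ^ (2 * k) = fromBlocks ((B * C) ^ k) 0 0 ((C * B) ^ k) := by
  rw [pow_mul, fromBlocks_zero_sq, fromBlocks_diagonal_pow]

theorem fromBlocks_zero_pow_two_mul_add_one (k : ℕ) :
    fromBlocks 0 B C 0 ^ (2 * k + 1) = fromBlocks 0 ((B * C) ^ k * B) ((C * B) ^ k * C) 0 := by
  simp [pow_succ, fromBlocks_zero_pow_two_mul, fromBlocks_multiply]

end Semiring

variable [RCLike 𝕂]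

theorem hasSum_exp_apply (M : Matrix l l 𝕂) (i j : l) :
    HasSum (fun k => (k !⁻¹ : 𝕂) * (M ^ k) i j) (exp M i j) := by
  let : NormedRing (Matrix l l 𝕂) := Matrix.linftyOpNormedRing
  let : NormedAlgebra 𝕂 (Matrix l l 𝕂) := Matrix.linftyOpNormedAlgebra
  -- The uniformity of the `linfty` norm is not reducibly the product one, so instance search
  -- cannot find completeness for it.
  have h := @exp_series_hasSum_exp' 𝕂 _ _ _ _ _ _ (FiniteDimensional.complete 𝕂 _) M
  exact Pi.hasSum.mp (Pi.hasSum.mp h i) j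

theorem hasSum_exp_apply_of_pow_odd_apply_eq_zero {M : Matrix l l 𝕂} {i j : l}
    (hodd : ∀ k, (M ^ (2 * k + 1)) i j = 0) :
    HasSum (fun k => (M ^ (2 * k)) i j / (2 * k)!) (exp M i j) := by
  have hzero : ∀ m ∉ Set.range (2 * ·), (m !⁻¹ : 𝕂) * (M ^ m) i j = 0 := by
    intro m hm
    obtain ⟨k, rfl⟩ : Odd m := Nat.not_even_iff_odd.mp fun ⟨k, hk⟩ => hm ⟨k, by dsimp only; omega⟩
    rw [hodd, mul_zero]
  have h := ((mul_right_injective₀ two_ne_zero).hasSum_iff hzero).mpr (hasSum_exp_apply M i j)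
  simpa only [Function.comp_def, div_eq_inv_mul] using h

variable (B : Matrix l m 𝕂) (C : Matrix m l 𝕂)

theorem hasSum_exp_fromBlocks_zero_apply_inl_inl (i j : l) :
    HasSum (fun k => ((B * C) ^ k) i j / (2 * k)!)
      (exp (fromBlocks 0 B C 0) (.inl i) (.inl j)) := by
  have h := hasSum_exp_apply_of_pow_odd_apply_eq_zero (M := fromBlocks 0 B C 0) (i := .inl i)
    (j := .inl j) fun k => by simp [fromBlocks_zero_pow_two_mul_add_one]
  simpa only [fromBlocks_zero_pow_two_mul, fromBlocks_apply₁₁] using h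

theorem hasSum_exp_fromBlocks_zero_apply_inr_inr (i j : m) :
    HasSum (fun k => ((C * B) ^ k) i j / (2 * k)!)
      (exp (fromBlocks 0 B C 0) (.inr i) (.inr j)) := by
  have h := hasSum_exp_apply_of_pow_odd_apply_eq_zero (M := fromBlocks 0 B C 0) (i := .inr i)
    (j := .inr j) fun k => by simp [fromBlocks_zero_pow_two_mul_add_one]
  simpa only [fromBlocks_zero_pow_two_mul, fromBlocks_apply₂₂] using h

end Matrix

/-- For an `n×n` real matrix `A` and the `2n×2n` block matrix
`𝒜 = [[0, A], [Aᵀ, 0]]`, for every `i` the diagonal entries of the matrix exponential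
satisfy `[e^𝒜]_{i,i} = ∑_{k=0}^∞ [(AAᵀ)^k]_{i,i} / (2k)!` and
`[e^𝒜]_{n+i,n+i} = ∑_{k=0}^∞ [(AᵀA)^k]_{i,i} / (2k)!`. -/
theorem stmt_12 (n : ℕ) (A : Matrix (Fin n) (Fin n) ℝ) (i : Fin n) :
    NormedSpace.exp (Matrix.fromBlocks (0 : Matrix (Fin n) (Fin n) ℝ) A Aᵀ 0)
        (Sum.inl i) (Sum.inl i) =
      (∑' k : ℕ, ((A * Aᵀ) ^ k) i i / ((2 * k).factorial : ℝ)) ∧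
    NormedSpace.exp (Matrix.fromBlocks (0 : Matrix (Fin n) (Fin n) ℝ) A Aᵀ 0)
        (Sum.inr i) (Sum.inr i) =
      (∑' k : ℕ, ((Aᵀ * A) ^ k) i i / ((2 * k).factorial : ℝ)) :=
  ⟨(hasSum_exp_fromBlocks_zero_apply_inl_inl A Aᵀ i i).tsum_eq.symm,
    (hasSum_exp_fromBlocks_zero_apply_inr_inr A Aᵀ i i).tsum_eq.symm⟩
end
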